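/- arXiv:2208.03686 — 7 statements merged into one kernel-verified Lean document; each statement's English description precedes it below -/
import Mathlib

section
/- Let I ⊆ ℝ be an interval, κ, τ : I → ℝ continuous, and c₀, c₁, c₂ ∈ ℝ. Set m₀(s) = s + c₀, let F : I → ℝ be an antiderivative of τ, let P be an antiderivative of s ↦ κ(s)(s + c₀)e^{−F(s)} and Q an antiderivative of s ↦ κ(s)(s + c₀)e^{F(s)}, and define m₁(s) = −c₁e^{F(s)} + c₂e^{−F(s)} − (1/2)e^{F(s)}P(s) − (1/2)e^{−F(s)}Q(s) and m₂(s) = c₁e^{F(s)} + c₂e^{−F(s)} + (1/2)e^{F(s)}P(s) − (1/2)e^{−F(s)}Q(s). Then for all s ∈ I: m₀'(s) = 1, m₁'(s) + κ(s)m₀(s) + τ(s)m₂(s) = 0, and m₂'(s) + τ(s)m₁(s) = 0. Conversely, any pair of differentiable functions m₁, m₂ : I → ℝ satisfying m₁' + κm₀ + τm₂ = 0 and m₂' + τm₁ = 0 with m₀(s) = s + c₀ is of this form for some constants c₁, c₂. -/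
/-!
With `u = m₂ - m₁` and `v = m₂ + m₁` the system decouples into the first-order linear
equations `u' = τ u + κ m₀` and `v' = -τ v - κ m₀`. The integrating factors `e^{-F}` and `e^{F}`
show that `u e^{-F} - P` and `v e^{F} + Q` are constant on the interval, which gives
`u = (2c₁ + P) e^{F}` and `v = (2c₂ - Q) e^{-F}`; conversely these functions solve the two
equations. The formulas for `m₁ = (v - u) / 2` and `m₂ = (u + v) / 2` follow.
-/

open Real

theorem Convex.is_const_of_hasDerivAt_eq_zero {I : Set ℝ} (hI : Convex ℝ I) {g : ℝ → ℝ}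
    (hg : ∀ s ∈ I, HasDerivAt g 0 s) {x y : ℝ} (hx : x ∈ I) (hy : y ∈ I) : g x = g y := by
  have := hI.norm_image_sub_le_of_norm_hasDerivWithin_le (f' := fun _ ↦ 0) (C := 0)
    (fun s hs ↦ (hg s hs).hasDerivWithinAt) (fun _ _ ↦ by simp) hy hx
  simpa only [zero_mul, norm_le_zero_iff, sub_eq_zero] using this

section LinearODE

variable {A B : ℝ → ℝ} {a b s : ℝ}

theorem hasDerivAt_add_mul_exp (C : ℝ) (hA : HasDerivAt A a s)
    (hB : HasDerivAt B (b * exp (-A s)) s) :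
    HasDerivAt (fun t ↦ (C + B t) * exp (A t)) (a * ((C + B s) * exp (A s)) + b) s := by
  have hexp : exp (-A s) * exp (A s) = 1 := by rw [← exp_add, neg_add_cancel, exp_zero]
  exact ((hB.const_add C).mul hA.exp).congr_deriv (by linear_combination b * hexp)

theorem hasDerivAt_mul_exp_neg_sub {y : ℝ → ℝ} (hy : HasDerivAt y (a * y s + b) s)
    (hA : HasDerivAt A a s) (hB : HasDerivAt B (b * exp (-A s)) s) :
    HasDerivAt (fun t ↦ y t * exp (-A t) - B t) 0 s :=
  ((hy.mul hA.neg.exp).sub hB).congr_deriv (by rw [Pi.neg_apply]; ring)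

theorem Convex.exists_eq_add_mul_exp {I : Set ℝ} (hI : Convex ℝ I) {y a b : ℝ → ℝ}
    (hy : ∀ s ∈ I, HasDerivAt y (a s * y s + b s) s) (hA : ∀ s ∈ I, HasDerivAt A (a s) s)
    (hB : ∀ s ∈ I, HasDerivAt B (b s * exp (-A s)) s) :
    ∃ C : ℝ, ∀ s ∈ I, y s = (C + B s) * exp (A s) := by
  rcases I.eq_empty_or_nonempty with rfl | ⟨s₀, hs₀⟩
  · exact ⟨0, by simp⟩
  refine ⟨y s₀ * exp (-A s₀) - B s₀, fun s hs ↦ ?_⟩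
  have hconst := hI.is_const_of_hasDerivAt_eq_zero
    (fun t ht ↦ hasDerivAt_mul_exp_neg_sub (hy t ht) (hA t ht) (hB t ht)) hs₀ hs
  have hexp : exp (-A s) * exp (A s) = 1 := by rw [← exp_add, neg_add_cancel, exp_zero]
  rw [hconst]
  linear_combination -(y s * hexp)

end LinearODE

theorem stmt_1_general
    (I : Set ℝ) (hIconv : Convex ℝ I)
    (κ τ : ℝ → ℝ)
    (c₀ : ℝ) (F P Q : ℝ → ℝ)
    (hF : ∀ s ∈ I, HasDerivAt F (τ s) s)
    (hP : ∀ s ∈ I, HasDerivAt P (κ s * (s + c₀) * Real.exp (-F s)) s)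
    (hQ : ∀ s ∈ I, HasDerivAt Q (κ s * (s + c₀) * Real.exp (F s)) s) :
    (∀ c₁ c₂ : ℝ, ∀ s ∈ I,
        HasDerivAt (fun t : ℝ => t + c₀) 1 s ∧
        HasDerivAt (fun t : ℝ => -c₁ * Real.exp (F t) + c₂ * Real.exp (-F t)
            - (1/2) * Real.exp (F t) * P t - (1/2) * Real.exp (-F t) * Q t)
          (-(κ s * (s + c₀)) - τ s *
            (c₁ * Real.exp (F s) + c₂ * Real.exp (-F s)
              + (1/2) * Real.exp (F s) * P s - (1/2) * Real.exp (-F s) * Q s)) s ∧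
        HasDerivAt (fun t : ℝ => c₁ * Real.exp (F t) + c₂ * Real.exp (-F t)
            + (1/2) * Real.exp (F t) * P t - (1/2) * Real.exp (-F t) * Q t)
          (-(τ s *
            (-c₁ * Real.exp (F s) + c₂ * Real.exp (-F s)
              - (1/2) * Real.exp (F s) * P s - (1/2) * Real.exp (-F s) * Q s))) s) ∧
    (∀ m₁ m₂ : ℝ → ℝ,
      (∀ s ∈ I, HasDerivAt m₁ (-(κ s * (s + c₀)) - τ s * m₂ s) s) →
      (∀ s ∈ I, HasDerivAt m₂ (-(τ s * m₁ s)) s) →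
      ∃ c₁ c₂ : ℝ, ∀ s ∈ I,
        m₁ s = -c₁ * Real.exp (F s) + c₂ * Real.exp (-F s)
          - (1/2) * Real.exp (F s) * P s - (1/2) * Real.exp (-F s) * Q s ∧
        m₂ s = c₁ * Real.exp (F s) + c₂ * Real.exp (-F s)
          + (1/2) * Real.exp (F s) * P s - (1/2) * Real.exp (-F s) * Q s) := by
  have hF' : ∀ s ∈ I, HasDerivAt (-F) (-τ s) s := fun s hs ↦ (hF s hs).neg
  have hQ' : ∀ s ∈ I, HasDerivAt (-Q) (-(κ s * (s + c₀)) * exp (-(-F) s)) s := fun s hs ↦ by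
    simpa only [Pi.neg_apply, neg_neg, neg_mul] using (hQ s hs).neg
  refine ⟨fun c₁ c₂ s hs ↦ ?_, fun m₁ m₂ h₁ h₂ ↦ ?_⟩
  · have hu := hasDerivAt_add_mul_exp (2 * c₁) (hF s hs) (hP s hs)
    have hv := hasDerivAt_add_mul_exp (2 * c₂) (hF' s hs) (hQ' s hs)
    refine ⟨(hasDerivAt_id s).add_const c₀, ?_, ?_⟩
    · refine (((hv.sub hu).div_const 2).congr_deriv ?_).congr_of_eventuallyEq
        (.of_forall fun t ↦ ?_)
      · simp only [Pi.neg_apply]; ring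
      · simp only [Pi.sub_apply, Pi.neg_apply]; ring
    · refine (((hu.add hv).div_const 2).congr_deriv ?_).congr_of_eventuallyEq
        (.of_forall fun t ↦ ?_)
      · simp only [Pi.neg_apply]; ring
      · simp only [Pi.add_apply, Pi.neg_apply]; ring
  · obtain ⟨C₁, hu⟩ := hIconv.exists_eq_add_mul_exp
      (fun s hs ↦ ((h₂ s hs).sub (h₁ s hs)).congr_deriv (by simp only [Pi.sub_apply]; ring)) hF hP
    obtain ⟨C₂, hv⟩ := hIconv.exists_eq_add_mul_exp
      (fun s hs ↦ ((h₂ s hs).add (h₁ s hs)).congr_deriv (by simp only [Pi.add_apply]; ring)) hF' hQ'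
    refine ⟨C₁ / 2, C₂ / 2, fun s hs ↦ ?_⟩
    have hu := hu s hs
    have hv := hv s hs
    simp only [Pi.sub_apply, Pi.add_apply, Pi.neg_apply] at hu hv
    constructor
    · linear_combination (hv - hu) / 2
    · linear_combination (hu + hv) / 2

/-- Explicit general solution of the linear system
`m₀' = 1`, `m₁' + κ m₀ + τ m₂ = 0`, `m₂' + τ m₁ = 0` satisfied by the Frenet components
of the position vector of an admissible spacelike curve in pseudo-Galilean space,
where `F` is an antiderivative of `τ`, `P` of `s ↦ κ s (s + c₀) e^{-F s}` and
`Q` of `s ↦ κ s (s + c₀) e^{F s}`. -/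
theorem stmt_1
    (I : Set ℝ) (hIconv : Convex ℝ I)
    (κ τ : ℝ → ℝ) (hκ : ContinuousOn κ I) (hτ : ContinuousOn τ I)
    (c₀ : ℝ) (F P Q : ℝ → ℝ)
    (hF : ∀ s ∈ I, HasDerivAt F (τ s) s)
    (hP : ∀ s ∈ I, HasDerivAt P (κ s * (s + c₀) * Real.exp (-F s)) s)
    (hQ : ∀ s ∈ I, HasDerivAt Q (κ s * (s + c₀) * Real.exp (F s)) s) :
    (∀ c₁ c₂ : ℝ, ∀ s ∈ I,
        HasDerivAt (fun t : ℝ => t + c₀) 1 s ∧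
        HasDerivAt (fun t : ℝ => -c₁ * Real.exp (F t) + c₂ * Real.exp (-F t)
            - (1/2) * Real.exp (F t) * P t - (1/2) * Real.exp (-F t) * Q t)
          (-(κ s * (s + c₀)) - τ s *
            (c₁ * Real.exp (F s) + c₂ * Real.exp (-F s)
              + (1/2) * Real.exp (F s) * P s - (1/2) * Real.exp (-F s) * Q s)) s ∧
        HasDerivAt (fun t : ℝ => c₁ * Real.exp (F t) + c₂ * Real.exp (-F t)
            + (1/2) * Real.exp (F t) * P t - (1/2) * Real.exp (-F t) * Q t)
          (-(τ s *
            (-c₁ * Real.exp (F s) + c₂ * Real.exp (-F s)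
              - (1/2) * Real.exp (F s) * P s - (1/2) * Real.exp (-F s) * Q s))) s) ∧
    (∀ m₁ m₂ : ℝ → ℝ,
      (∀ s ∈ I, HasDerivAt m₁ (-(κ s * (s + c₀)) - τ s * m₂ s) s) →
      (∀ s ∈ I, HasDerivAt m₂ (-(τ s * m₁ s)) s) →
      ∃ c₁ c₂ : ℝ, ∀ s ∈ I,
        m₁ s = -c₁ * Real.exp (F s) + c₂ * Real.exp (-F s)
          - (1/2) * Real.exp (F s) * P s - (1/2) * Real.exp (-F s) * Q s ∧
        m₂ s = c₁ * Real.exp (F s) + c₂ * Real.exp (-F s)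
          + (1/2) * Real.exp (F s) * P s - (1/2) * Real.exp (-F s) * Q s) :=
  stmt_1_general I hIconv κ τ c₀ F P Q hF hP hQ
end

section
/- Let I ⊆ ℝ be an interval, let κ, τ : I → ℝ be nowhere-vanishing functions with κ twice differentiable and τ differentiable, and let T, N, B : I → ℝ³ be differentiable maps satisfying the Frenet equations T' = κN, N' = τB, B' = τN on I (so that T is three times differentiable). Then T satisfies the third-order linear vector differential equation (1/(τκ))T''' + [(2/τ)(1/κ)' + (1/τ)'(1/κ)]T'' + [(1/τ)(1/κ)'' + (1/τ)'(1/κ)' − τ/κ]T' = 0 on I. -/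
/-!
Differentiating `T' = κN` with the Frenet equations expresses `T''` and `T'''` in the frame:
`T'' = κ'N + κτB` and `T''' = (κ'' + κτ²)N + (2κ'τ + κτ')B`. Substituting these together with
`(1/κ)' = -κ'/κ²`, `(1/κ)'' = (2κ'² - κκ'')/κ³` and `(1/τ)' = -τ'/τ²`, the coefficients of `N` and
of `B` in the left-hand side vanish identically. Equivalently, the equation is the expansion of
`((1/τ)((1/κ)T')')' = (τ/κ)T'`, which is `B' = τN` after eliminating `N = (1/κ)T'` and `B = (1/τ)N'`.
-/

variable {E : Type*} [NormedAddCommGroup E] [NormedSpace ℝ E]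

theorem hasDerivAt_deriv_of_forall_hasDerivAt {U : Set ℝ} (hU : IsOpen U) {f g : ℝ → E}
    (hf : ∀ y ∈ U, HasDerivAt f (g y) y) {x : ℝ} (hx : x ∈ U) {g' : E}
    (hg : HasDerivAt g g' x) : HasDerivAt (deriv f) g' x :=
  hg.congr_of_eventuallyEq <| by
    filter_upwards [hU.mem_nhds hx] with y hy using (hf y hy).deriv

theorem hasDerivAt_one_div {c : ℝ → ℝ} {x : ℝ} (hc : DifferentiableAt ℝ c x) (hx : c x ≠ 0) :
    HasDerivAt (fun y => 1 / c y) (-deriv c x / c x ^ 2) x := by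
  simpa only [one_div] using hc.hasDerivAt.fun_inv hx

theorem hasDerivAt_deriv_one_div {U : Set ℝ} (hU : IsOpen U) {c : ℝ → ℝ}
    (hc0 : ∀ y ∈ U, c y ≠ 0) (hc1 : ∀ y ∈ U, DifferentiableAt ℝ c y) {x : ℝ} (hx : x ∈ U)
    (hc2 : DifferentiableAt ℝ (deriv c) x) :
    HasDerivAt (deriv fun y => 1 / c y)
      ((2 * deriv c x ^ 2 - c x * deriv (deriv c) x) / c x ^ 3) x := by
  refine hasDerivAt_deriv_of_forall_hasDerivAt hU
    (fun y hy => hasDerivAt_one_div (hc1 y hy) (hc0 y hy)) hx ?_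
  refine (hc2.hasDerivAt.fun_neg.fun_div ((hc1 x hx).hasDerivAt.fun_pow 2)
    (pow_ne_zero 2 (hc0 x hx))).congr_deriv ?_
  have hcx := hc0 x hx
  norm_num
  field_simp
  ring

section Frenet

variable {I : Set ℝ} {κ τ : ℝ → ℝ} {T N B : ℝ → E}

theorem frenet_hasDerivAt_deriv (hI : IsOpen I) (hκ1 : ∀ s ∈ I, DifferentiableAt ℝ κ s)
    (hT : ∀ s ∈ I, HasDerivAt T (κ s • N s) s) (hN : ∀ s ∈ I, HasDerivAt N (τ s • B s) s)
    {s : ℝ} (hs : s ∈ I) :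
    HasDerivAt (deriv T) (deriv κ s • N s + (κ s * τ s) • B s) s := by
  refine hasDerivAt_deriv_of_forall_hasDerivAt hI hT hs ?_
  refine ((hκ1 s hs).hasDerivAt.fun_smul (hN s hs)).congr_deriv ?_
  rw [smul_smul, add_comm]

theorem frenet_hasDerivAt_deriv_deriv (hI : IsOpen I) (hκ1 : ∀ s ∈ I, DifferentiableAt ℝ κ s)
    (hτ1 : ∀ s ∈ I, DifferentiableAt ℝ τ s)
    (hT : ∀ s ∈ I, HasDerivAt T (κ s • N s) s) (hN : ∀ s ∈ I, HasDerivAt N (τ s • B s) s)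
    (hB : ∀ s ∈ I, HasDerivAt B (τ s • N s) s) {s : ℝ} (hs : s ∈ I)
    (hκ2 : DifferentiableAt ℝ (deriv κ) s) :
    HasDerivAt (deriv (deriv T))
      ((deriv (deriv κ) s + κ s * τ s ^ 2) • N s +
        (2 * deriv κ s * τ s + κ s * deriv τ s) • B s) s := by
  refine hasDerivAt_deriv_of_forall_hasDerivAt hI
    (fun y hy => frenet_hasDerivAt_deriv hI hκ1 hT hN hy) hs ?_
  refine ((hκ2.hasDerivAt.fun_smul (hN s hs)).fun_add
    (((hκ1 s hs).hasDerivAt.fun_mul (hτ1 s hs).hasDerivAt).fun_smul (hB s hs))).congr_deriv ?_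
  module

end Frenet

theorem stmt_3_general
    (I : Set ℝ) (hIopen : IsOpen I)
    (κ τ : ℝ → ℝ)
    (hκ0 : ∀ s ∈ I, κ s ≠ 0) (hτ0 : ∀ s ∈ I, τ s ≠ 0)
    (hκ1 : ∀ s ∈ I, DifferentiableAt ℝ κ s)
    (hκ2 : ∀ s ∈ I, DifferentiableAt ℝ (deriv κ) s)
    (hτ1 : ∀ s ∈ I, DifferentiableAt ℝ τ s)
    (T N B : ℝ → EuclideanSpace ℝ (Fin 3))
    (hT : ∀ s ∈ I, HasDerivAt T (κ s • N s) s)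
    (hN : ∀ s ∈ I, HasDerivAt N (τ s • B s) s)
    (hB : ∀ s ∈ I, HasDerivAt B (τ s • N s) s) :
    ∀ s ∈ I,
      (1 / (τ s * κ s)) • deriv (deriv (deriv T)) s +
      ((2 / τ s) * deriv (fun x => 1 / κ x) s +
          deriv (fun x => 1 / τ x) s * (1 / κ s)) • deriv (deriv T) s +
      ((1 / τ s) * deriv (deriv (fun x => 1 / κ x)) s +
          deriv (fun x => 1 / τ x) s * deriv (fun x => 1 / κ x) s - τ s / κ s) •
        deriv T s = 0 := by
  intro s hs
  rw [(hT s hs).deriv, (frenet_hasDerivAt_deriv hIopen hκ1 hT hN hs).deriv,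
    (frenet_hasDerivAt_deriv_deriv hIopen hκ1 hτ1 hT hN hB hs (hκ2 s hs)).deriv,
    (hasDerivAt_one_div (hκ1 s hs) (hκ0 s hs)).deriv,
    (hasDerivAt_deriv_one_div hIopen hκ0 hκ1 hs (hκ2 s hs)).deriv,
    (hasDerivAt_one_div (hτ1 s hs) (hτ0 s hs)).deriv]
  have hκs := hκ0 s hs
  have hτs := hτ0 s hs
  match_scalars <;> field_simp <;> ring

/-- If `T, N, B : I → ℝ³` satisfy the pseudo-Galilean Frenet equations
`T' = κ N`, `N' = τ B`, `B' = τ N` with `κ, τ` nowhere vanishing, `κ` twice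
differentiable and `τ` differentiable, then `T` satisfies the third-order linear
vector differential equation
`(1/(τκ)) T''' + [(2/τ)(1/κ)' + (1/τ)'(1/κ)] T'' + [(1/τ)(1/κ)'' + (1/τ)'(1/κ)' − τ/κ] T' = 0`. -/
theorem stmt_3
    (I : Set ℝ) (hIopen : IsOpen I) (hIconv : Convex ℝ I)
    (κ τ : ℝ → ℝ)
    (hκ0 : ∀ s ∈ I, κ s ≠ 0) (hτ0 : ∀ s ∈ I, τ s ≠ 0)
    (hκ1 : ∀ s ∈ I, DifferentiableAt ℝ κ s)
    (hκ2 : ∀ s ∈ I, DifferentiableAt ℝ (deriv κ) s)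
    (hτ1 : ∀ s ∈ I, DifferentiableAt ℝ τ s)
    (T N B : ℝ → EuclideanSpace ℝ (Fin 3))
    (hT : ∀ s ∈ I, HasDerivAt T (κ s • N s) s)
    (hN : ∀ s ∈ I, HasDerivAt N (τ s • B s) s)
    (hB : ∀ s ∈ I, HasDerivAt B (τ s • N s) s) :
    ∀ s ∈ I,
      (1 / (τ s * κ s)) • deriv (deriv (deriv T)) s +
      ((2 / τ s) * deriv (fun x => 1 / κ x) s +
          deriv (fun x => 1 / τ x) s * (1 / κ s)) • deriv (deriv T) s +
      ((1 / τ s) * deriv (deriv (fun x => 1 / κ x)) s +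
          deriv (fun x => 1 / τ x) s * deriv (fun x => 1 / κ x) s - τ s / κ s) •
        deriv T s = 0 :=
  stmt_3_general I hIopen κ τ hκ0 hτ0 hκ1 hκ2 hτ1 T N B hT hN hB
end

section
/- Let I ⊆ ℝ be an interval, let κ : I → ℝ be continuously differentiable and positive, and let τ : I → ℝ be continuous. Let Θ be an antiderivative of τ, let g₁ be an antiderivative of s ↦ κ(s)sinh(Θ(s)) and g₂ an antiderivative of s ↦ κ(s)cosh(Θ(s)), and let y be an antiderivative of −g₁ and z an antiderivative of g₂. Then α(s) = (s, y(s), z(s)) is an admissible spacelike curve in the pseudo-Galilean space G¹₃ whose curvature equals κ(s) and whose torsion equals τ(s) for all s ∈ I, and whose Frenet frame is T(s) = (1, −g₁(s), g₂(s)), N(s) = (0, −sinh Θ(s), cosh Θ(s)), B(s) = (0, −cosh Θ(s), sinh Θ(s)). -/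
/-!
The second derivatives of the curve are `y'' = -κ sinh Θ` and `z'' = κ cosh Θ`, so
`(y'', z'')` is `κ` times a unit vector of the hyperbola `z² - y² = 1` at hyperbolic angle `Θ`.
Hence `y''² - z''² = -κ²`, which gives the curvature, and the Wronskian `y'' z''' - y''' z''`
equals `κ² Θ' = κ² τ`, which gives the torsion. Each antiderivative gains one order of
smoothness, so `y` and `z` are `C³`.
-/

open Real

section Antiderivative

variable {𝕜 F : Type*} [NontriviallyNormedField 𝕜] [NormedAddCommGroup F] [NormedSpace 𝕜 F]
  {I : Set 𝕜} {f g : 𝕜 → F}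

theorem contDiffOn_succ_of_hasDerivAt (hI : IsOpen I) {n : ℕ∞}
    (hf : ∀ s ∈ I, HasDerivAt f (g s) s) (hg : ContDiffOn 𝕜 n g I) :
    ContDiffOn 𝕜 (n + 1) f I :=
  (contDiffOn_succ_iff_deriv_of_isOpen hI).2
    ⟨fun s hs => (hf s hs).differentiableAt.differentiableWithinAt, by simp,
      hg.congr fun s hs => (hf s hs).deriv⟩

theorem hasDerivAt_deriv_of_forall_hasDerivAt_s4 (hI : IsOpen I) {g' : F} {s : 𝕜}
    (hf : ∀ t ∈ I, HasDerivAt f (g t) t) (hs : s ∈ I) (hg : HasDerivAt g g' s) :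
    HasDerivAt (deriv f) g' s :=
  hg.congr_of_eventuallyEq <|
    Filter.eventuallyEq_of_mem (hI.mem_nhds hs) fun t ht => (hf t ht).deriv

end Antiderivative

theorem neg_mul_sinh_sq_sub_mul_cosh_sq (k θ : ℝ) :
    (-(k * sinh θ)) ^ 2 - (k * cosh θ) ^ 2 = -k ^ 2 := by
  linear_combination (-k ^ 2) * cosh_sq_sub_sinh_sq θ

theorem hyperbolic_wronskian_div_sq {k : ℝ} (hk : k ≠ 0) (k' θ θ' : ℝ) :
    (-(k * sinh θ) * (k' * cosh θ + k * (sinh θ * θ')) -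
      -(k' * sinh θ + k * (cosh θ * θ')) * (k * cosh θ)) / k ^ 2 = θ' := by
  rw [div_eq_iff (pow_ne_zero 2 hk)]
  linear_combination (k ^ 2 * θ') * cosh_sq_sub_sinh_sq θ

theorem stmt_4_general
    (I : Set ℝ) (hIopen : IsOpen I)
    (κ τ : ℝ → ℝ) (hκC1 : ContDiffOn ℝ 1 κ I) (hκpos : ∀ s ∈ I, 0 < κ s)
    (hτ : ContinuousOn τ I)
    (Θ g₁ g₂ y z : ℝ → ℝ)
    (hΘ : ∀ s ∈ I, HasDerivAt Θ (τ s) s)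
    (hg₁ : ∀ s ∈ I, HasDerivAt g₁ (κ s * Real.sinh (Θ s)) s)
    (hg₂ : ∀ s ∈ I, HasDerivAt g₂ (κ s * Real.cosh (Θ s)) s)
    (hy : ∀ s ∈ I, HasDerivAt y (-g₁ s) s)
    (hz : ∀ s ∈ I, HasDerivAt z (g₂ s) s) :
    ContDiffOn ℝ 3 y I ∧ ContDiffOn ℝ 3 z I ∧
    (∀ s ∈ I,
      deriv y s = -g₁ s ∧
      deriv z s = g₂ s ∧
      (deriv (deriv y) s) ^ 2 - (deriv (deriv z) s) ^ 2 ≠ 0 ∧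
      Real.sqrt |(deriv (deriv y) s) ^ 2 - (deriv (deriv z) s) ^ 2| = κ s ∧
      (deriv (deriv y) s * deriv (deriv (deriv z)) s -
        deriv (deriv (deriv y)) s * deriv (deriv z) s) / (κ s) ^ 2 = τ s ∧
      deriv (deriv y) s / κ s = -Real.sinh (Θ s) ∧
      deriv (deriv z) s / κ s = Real.cosh (Θ s)) ∧
    ∃ ε : ℝ, (ε = 1 ∨ ε = -1) ∧ ∀ s ∈ I,
      |(deriv (deriv y) s) ^ 2 - (deriv (deriv z) s) ^ 2| =
        ε * ((deriv (deriv y) s) ^ 2 - (deriv (deriv z) s) ^ 2) ∧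
      ε * deriv (deriv z) s / κ s = -Real.cosh (Θ s) ∧
      ε * deriv (deriv y) s / κ s = Real.sinh (Θ s) := by
  have hΘ1 : ContDiffOn ℝ 1 Θ I := by
    simpa using contDiffOn_succ_of_hasDerivAt (n := 0) hIopen hΘ (contDiffOn_zero.2 hτ)
  have hyC3 : ContDiffOn ℝ 3 y I := contDiffOn_succ_of_hasDerivAt (n := 2) hIopen hy
    (contDiffOn_succ_of_hasDerivAt (n := 1) hIopen hg₁
      (hκC1.mul (contDiff_sinh.comp_contDiffOn hΘ1))).neg
  have hzC3 : ContDiffOn ℝ 3 z I := contDiffOn_succ_of_hasDerivAt (n := 2) hIopen hz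
    (contDiffOn_succ_of_hasDerivAt (n := 1) hIopen hg₂
      (hκC1.mul (contDiff_cosh.comp_contDiffOn hΘ1)))
  have hκ' : ∀ s ∈ I, HasDerivAt κ (deriv κ s) s := fun s hs =>
    ((hκC1.differentiableOn one_ne_zero s hs).differentiableAt (hIopen.mem_nhds hs)).hasDerivAt
  have hy₂ : ∀ s ∈ I, HasDerivAt (deriv y) (-(κ s * sinh (Θ s))) s := fun s hs =>
    hasDerivAt_deriv_of_forall_hasDerivAt_s4 hIopen hy hs (hg₁ s hs).neg
  have hz₂ : ∀ s ∈ I, HasDerivAt (deriv z) (κ s * cosh (Θ s)) s := fun s hs =>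
    hasDerivAt_deriv_of_forall_hasDerivAt_s4 hIopen hz hs (hg₂ s hs)
  refine ⟨hyC3, hzC3, fun s hs => ?_, -1, Or.inr rfl, fun s hs => ?_⟩ <;>
    have hk := (hκpos s hs).ne' <;>
    rw [(hy₂ s hs).deriv, (hz₂ s hs).deriv, neg_mul_sinh_sq_sub_mul_cosh_sq, abs_neg, abs_sq]
  · have hy₃ : HasDerivAt (deriv (deriv y))
        (-(deriv κ s * sinh (Θ s) + κ s * (cosh (Θ s) * τ s))) s :=
      hasDerivAt_deriv_of_forall_hasDerivAt_s4 hIopen hy₂ hs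
        ((hκ' s hs).mul ((hasDerivAt_sinh (Θ s)).comp s (hΘ s hs))).neg
    have hz₃ : HasDerivAt (deriv (deriv z))
        (deriv κ s * cosh (Θ s) + κ s * (sinh (Θ s) * τ s)) s :=
      hasDerivAt_deriv_of_forall_hasDerivAt_s4 hIopen hz₂ hs
        ((hκ' s hs).mul ((hasDerivAt_cosh (Θ s)).comp s (hΘ s hs)))
    rw [hy₃.deriv, hz₃.deriv, hyperbolic_wronskian_div_sq hk, sqrt_sq (hκpos s hs).le]
    exact ⟨(hy s hs).deriv, (hz s hs).deriv, by simpa using hk, rfl, rfl,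
      by field_simp, by field_simp⟩
  · exact ⟨by ring, by field_simp, by field_simp⟩

/-- Intrinsic construction of an admissible spacelike curve in `G¹₃` with
prescribed curvature `κ > 0` (continuously differentiable) and continuous torsion `τ`:
with `Θ` an antiderivative of `τ`, `g₁` of `κ sinh Θ`, `g₂` of `κ cosh Θ`, `y` of `-g₁`
and `z` of `g₂`, the curve `α s = (s, y s, z s)` is admissible spacelike with curvature
`κ`, torsion `τ` and Frenet frame `T = (1, -g₁, g₂)`, `N = (0, -sinh Θ, cosh Θ)`,
`B = (0, -cosh Θ, sinh Θ)`. -/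
theorem stmt_4
    (I : Set ℝ) (hIopen : IsOpen I) (hIconv : Convex ℝ I)
    (κ τ : ℝ → ℝ) (hκC1 : ContDiffOn ℝ 1 κ I) (hκpos : ∀ s ∈ I, 0 < κ s)
    (hτ : ContinuousOn τ I)
    (Θ g₁ g₂ y z : ℝ → ℝ)
    (hΘ : ∀ s ∈ I, HasDerivAt Θ (τ s) s)
    (hg₁ : ∀ s ∈ I, HasDerivAt g₁ (κ s * Real.sinh (Θ s)) s)
    (hg₂ : ∀ s ∈ I, HasDerivAt g₂ (κ s * Real.cosh (Θ s)) s)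
    (hy : ∀ s ∈ I, HasDerivAt y (-g₁ s) s)
    (hz : ∀ s ∈ I, HasDerivAt z (g₂ s) s) :
    ContDiffOn ℝ 3 y I ∧ ContDiffOn ℝ 3 z I ∧
    (∀ s ∈ I,
      deriv y s = -g₁ s ∧
      deriv z s = g₂ s ∧
      (deriv (deriv y) s) ^ 2 - (deriv (deriv z) s) ^ 2 ≠ 0 ∧
      Real.sqrt |(deriv (deriv y) s) ^ 2 - (deriv (deriv z) s) ^ 2| = κ s ∧
      (deriv (deriv y) s * deriv (deriv (deriv z)) s -
        deriv (deriv (deriv y)) s * deriv (deriv z) s) / (κ s) ^ 2 = τ s ∧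
      deriv (deriv y) s / κ s = -Real.sinh (Θ s) ∧
      deriv (deriv z) s / κ s = Real.cosh (Θ s)) ∧
    ∃ ε : ℝ, (ε = 1 ∨ ε = -1) ∧ ∀ s ∈ I,
      |(deriv (deriv y) s) ^ 2 - (deriv (deriv z) s) ^ 2| =
        ε * ((deriv (deriv y) s) ^ 2 - (deriv (deriv z) s) ^ 2) ∧
      ε * deriv (deriv z) s / κ s = -Real.cosh (Θ s) ∧
      ε * deriv (deriv y) s / κ s = Real.sinh (Θ s) :=
  stmt_4_general I hIopen κ τ hκC1 hκpos hτ Θ g₁ g₂ y z hΘ hg₁ hg₂ hy hz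
end

section
/- Let α be an admissible spacelike curve in the pseudo-Galilean space G¹₃ on an interval I, with continuously differentiable curvature κ, nowhere-vanishing torsion τ, and Frenet frame {T, N, B}, and let m₀, m₁, m₂ : I → ℝ be differentiable with α = m₀T + m₁N + m₂B on I, so that m₀(s) = s + c₀ for a constant c₀; assume s + c₀ ≠ 0 on I. If α is of constant-ratio, i.e. m₀(s)² = c₃(m₂(s)² − m₁(s)²) on I for some nonzero constant c₃, then for all s ∈ I: m₁(s) = 1/(c₃κ(s)), m₂(s) = (κ'(s) − c₃κ(s)³(s + c₀))/(c₃κ(s)²τ(s)), and the function s ↦ (κ'(s) − c₃κ(s)³(s + c₀))/(c₃κ(s)²τ(s)) is differentiable with derivative equal to −τ(s)/(c₃κ(s)). -/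
/-!
Differentiating `α = m₀ T + m₁ N + m₂ B` with the Frenet equations `T' = κ N`, `N' = τ B`,
`B' = τ N` and comparing coefficients in the basis `{T, N, B}` gives `m₀' = 1`,
`m₁' = -(m₀ κ + m₂ τ)` and `m₂' = -m₁ τ`. Along this system the derivative of the
constant-ratio relation `m₀² = c₃ (m₂² - m₁²)` reads `m₀ = c₃ κ m₀ m₁`, so `m₁ = 1 / (c₃ κ)`
because `m₀ ≠ 0`. Differentiating this value of `m₁` and comparing with the second equation
gives `m₂`, and the third equation gives `m₂'`.
-/

open Filter Topology

theorem ContDiffOn.hasDerivAt_deriv {f : ℝ → ℝ} {I : Set ℝ} {n : WithTop ℕ∞}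
    (hf : ContDiffOn ℝ n f I) (hI : IsOpen I) (hn : n ≠ 0) {s : ℝ} (hs : s ∈ I) :
    HasDerivAt f (deriv f s) s :=
  ((hf.differentiableOn hn).differentiableAt (hI.mem_nhds hs)).hasDerivAt

section Frenet

variable {a b κ : ℝ → ℝ} {a' b' κ' ε s : ℝ}

theorem mul_deriv_eq_of_sq_eq (ha : HasDerivAt a a' s) (hb : HasDerivAt b b' s)
    (hκ : HasDerivAt κ κ' s)
    (hsq : (fun x => κ x ^ 2) =ᶠ[𝓝 s] fun x => ε * (a x ^ 2 - b x ^ 2)) :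
    κ s * κ' = ε * (a s * a' - b s * b') := by
  have h := (hκ.pow 2).unique ((((ha.pow 2).sub (hb.pow 2)).const_mul ε).congr_of_eventuallyEq hsq)
  push_cast at h
  linear_combination h / 2

theorem hasDerivAt_frenet_normal {N : ℝ → ℝ × ℝ × ℝ} (ha : HasDerivAt a a' s)
    (hb : HasDerivAt b b' s) (hκ : HasDerivAt κ κ' s) (hκ0 : κ s ≠ 0)
    (hsq : (fun x => κ x ^ 2) =ᶠ[𝓝 s] fun x => ε * (a x ^ 2 - b x ^ 2))
    (hN : N =ᶠ[𝓝 s] fun x => (0, a x / κ x, b x / κ x)) :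
    HasDerivAt N (((a s * b' - a' * b s) / κ s ^ 2) •
      ((0 : ℝ), ε * b s / κ s, ε * a s / κ s)) s := by
  have hκκ' := mul_deriv_eq_of_sq_eq ha hb hκ hsq
  have hsq_s : κ s ^ 2 = ε * (a s ^ 2 - b s ^ 2) := hsq.eq_of_nhds
  refine (((hasDerivAt_const s (0 : ℝ)).prodMk
    ((ha.div hκ hκ0).prodMk (hb.div hκ hκ0))).congr_deriv ?_).congr_of_eventuallyEq hN
  simp only [Prod.smul_mk, smul_eq_mul, mul_zero, Prod.mk.injEq, true_and]
  constructor
  · field_simp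
    linear_combination a' * hsq_s - a s * hκκ'
  · field_simp
    linear_combination b' * hsq_s - b s * hκκ'

theorem hasDerivAt_frenet_binormal {B : ℝ → ℝ × ℝ × ℝ} (ha : HasDerivAt a a' s)
    (hb : HasDerivAt b b' s) (hκ : HasDerivAt κ κ' s) (hκ0 : κ s ≠ 0) (hε : ε ^ 2 = 1)
    (hsq : (fun x => κ x ^ 2) =ᶠ[𝓝 s] fun x => ε * (a x ^ 2 - b x ^ 2))
    (hB : B =ᶠ[𝓝 s] fun x => (0, ε * b x / κ x, ε * a x / κ x)) :
    HasDerivAt B (((a s * b' - a' * b s) / κ s ^ 2) •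
      ((0 : ℝ), a s / κ s, b s / κ s)) s := by
  have hκκ' := mul_deriv_eq_of_sq_eq ha hb hκ hsq
  have hsq_s : κ s ^ 2 = ε * (a s ^ 2 - b s ^ 2) := hsq.eq_of_nhds
  refine (((hasDerivAt_const s (0 : ℝ)).prodMk
    (((hb.const_mul ε).div hκ hκ0).prodMk ((ha.const_mul ε).div hκ hκ0))).congr_deriv
      ?_).congr_of_eventuallyEq hB
  simp only [Prod.smul_mk, smul_eq_mul, mul_zero, Prod.mk.injEq, true_and]
  constructor
  · field_simp
    linear_combination ε * (b' * hsq_s - b s * hκκ') + a s * (b' * a s - b s * a') * hε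
  · field_simp
    linear_combination ε * (a' * hsq_s - a s * hκκ') + b s * (a s * b' - a' * b s) * hε

end Frenet

theorem pseudoGalilean_frenet_equations {I : Set ℝ} (hI : IsOpen I) {y z κ τ : ℝ → ℝ} {ε : ℝ}
    {T N B : ℝ → ℝ × ℝ × ℝ} (hy : ContDiffOn ℝ 3 y I) (hz : ContDiffOn ℝ 3 z I)
    (hκ : ContDiffOn ℝ 1 κ I) (hκ0 : ∀ s ∈ I, κ s ≠ 0) (hε : ε ^ 2 = 1)
    (hκsq : ∀ s ∈ I, κ s ^ 2 = ε * (deriv (deriv y) s ^ 2 - deriv (deriv z) s ^ 2))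
    (hτ : ∀ s ∈ I, τ s = (deriv (deriv y) s * deriv (deriv (deriv z)) s -
        deriv (deriv (deriv y)) s * deriv (deriv z) s) / κ s ^ 2)
    (hT : ∀ s ∈ I, T s = (1, deriv y s, deriv z s))
    (hN : ∀ s ∈ I, N s = (0, deriv (deriv y) s / κ s, deriv (deriv z) s / κ s))
    (hB : ∀ s ∈ I, B s = (0, ε * deriv (deriv z) s / κ s, ε * deriv (deriv y) s / κ s))
    {s : ℝ} (hs : s ∈ I) :
    HasDerivAt (fun x => (x, y x, z x)) (T s) s ∧ HasDerivAt T (κ s • N s) s ∧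
      HasDerivAt N (τ s • B s) s ∧ HasDerivAt B (τ s • N s) s := by
  have near {P : ℝ → Prop} (h : ∀ x ∈ I, P x) : ∀ᶠ x in 𝓝 s, P x :=
    eventually_of_mem (hI.mem_nhds hs) h
  have hy' : ContDiffOn ℝ 2 (deriv y) I := hy.deriv_of_isOpen hI (by norm_num)
  have hz' : ContDiffOn ℝ 2 (deriv z) I := hz.deriv_of_isOpen hI (by norm_num)
  have hy'' : ContDiffOn ℝ 1 (deriv (deriv y)) I := hy'.deriv_of_isOpen hI (by norm_num)
  have hz'' : ContDiffOn ℝ 1 (deriv (deriv z)) I := hz'.deriv_of_isOpen hI (by norm_num)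
  have ha := hy''.hasDerivAt_deriv hI one_ne_zero hs
  have hb := hz''.hasDerivAt_deriv hI one_ne_zero hs
  have hκD := hκ.hasDerivAt_deriv hI one_ne_zero hs
  refine ⟨?_, ?_, ?_, ?_⟩
  · rw [hT s hs]
    exact (hasDerivAt_id' s).prodMk ((hy.hasDerivAt_deriv hI (by norm_num) hs).prodMk
      (hz.hasDerivAt_deriv hI (by norm_num) hs))
  · refine (((hasDerivAt_const s (1 : ℝ)).prodMk ((hy'.hasDerivAt_deriv hI two_ne_zero hs).prodMk
      (hz'.hasDerivAt_deriv hI two_ne_zero hs))).congr_deriv ?_).congr_of_eventuallyEq (near hT)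
    rw [hN s hs]
    simp only [Prod.smul_mk, smul_eq_mul, mul_zero, mul_div_cancel₀ _ (hκ0 s hs)]
  · rw [hτ s hs, hB s hs]
    exact hasDerivAt_frenet_normal ha hb hκD (hκ0 s hs) (near hκsq) (near hN)
  · rw [hτ s hs, hN s hs]
    exact hasDerivAt_frenet_binormal ha hb hκD (hκ0 s hs) hε (near hκsq) (near hB)

theorem linearIndependent_pseudoGalilean_frame {u v a b k ε : ℝ} (hab : a ^ 2 - b ^ 2 ≠ 0)
    (hk : k ≠ 0) (hε : ε ≠ 0) :
    LinearIndependent ℝ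
      ![((1 : ℝ), u, v), ((0 : ℝ), a / k, b / k), ((0 : ℝ), ε * b / k, ε * a / k)] := by
  rw [Fintype.linearIndependent_iff]
  intro g hg
  simp only [Fin.sum_univ_three, Matrix.cons_val, Prod.smul_mk, Prod.mk_add_mk, smul_eq_mul,
    Prod.mk_eq_zero] at hg
  obtain ⟨hg₀, h₁, h₂⟩ := hg
  simp only [mul_one, mul_zero, add_zero] at hg₀
  rw [hg₀] at h₁ h₂
  field_simp at h₁ h₂
  have hg₁ : g 1 = 0 := by
    refine (mul_eq_zero.1 ?_).resolve_right hab
    linear_combination a * h₁ - b * h₂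
  have hg₂ : g 2 = 0 := by
    refine (mul_eq_zero.1 ?_).resolve_right (mul_ne_zero hε hab)
    linear_combination a * h₂ - b * h₁
  intro i
  fin_cases i <;> assumption

theorem coeff_derivs_of_frenet {E : Type*} [NormedAddCommGroup E] [NormedSpace ℝ E]
    {α T N B : ℝ → E} {m₀ m₁ m₂ : ℝ → ℝ} {s k t m₀' m₁' m₂' : ℝ}
    (hindep : LinearIndependent ℝ ![T s, N s, B s])
    (hα : HasDerivAt α (T s) s) (hT : HasDerivAt T (k • N s) s)
    (hN : HasDerivAt N (t • B s) s) (hB : HasDerivAt B (t • N s) s)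
    (h₀ : HasDerivAt m₀ m₀' s) (h₁ : HasDerivAt m₁ m₁' s) (h₂ : HasDerivAt m₂ m₂' s)
    (hdecomp : α =ᶠ[𝓝 s] fun x => m₀ x • T x + m₁ x • N x + m₂ x • B x) :
    m₀' = 1 ∧ m₁' = -(m₀ s * k + m₂ s * t) ∧ m₂' = -(m₁ s * t) := by
  have hcomb := hα.unique
    ((((h₀.smul hT).add (h₁.smul hN)).add (h₂.smul hB)).congr_of_eventuallyEq hdecomp)
  have hzero := Fintype.linearIndependent_iff.1 hindep
    ![m₀' - 1, m₁' + (m₀ s * k + m₂ s * t), m₂' + m₁ s * t] (by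
      simp only [Fin.sum_univ_three, Matrix.cons_val]
      linear_combination (norm := module) -hcomb)
  refine ⟨?_, ?_, ?_⟩
  · linear_combination (by simpa using hzero 0 : m₀' - 1 = 0)
  · linear_combination (by simpa using hzero 1 : m₁' + (m₀ s * k + m₂ s * t) = 0)
  · linear_combination (by simpa using hzero 2 : m₂' + m₁ s * t = 0)

theorem mul_mul_eq_one_of_constRatio {m₀ m₁ m₂ : ℝ → ℝ} {s k t c m₁' m₂' : ℝ}
    (h₀ : HasDerivAt m₀ 1 s) (h₁ : HasDerivAt m₁ m₁' s) (h₂ : HasDerivAt m₂ m₂' s)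
    (he₁ : m₁' = -(m₀ s * k + m₂ s * t)) (he₂ : m₂' = -(m₁ s * t))
    (hratio : (fun x => m₀ x ^ 2) =ᶠ[𝓝 s] fun x => c * (m₂ x ^ 2 - m₁ x ^ 2))
    (hm₀ : m₀ s ≠ 0) :
    c * k * m₁ s = 1 := by
  have h := (h₀.pow 2).unique
    ((((h₂.pow 2).sub (h₁.pow 2)).const_mul c).congr_of_eventuallyEq hratio)
  push_cast at h
  refine mul_left_cancel₀ hm₀ ?_
  linear_combination -h / 2 - c * m₂ s * he₂ + c * m₁ s * he₁

theorem constRatio_coeffs {I : Set ℝ} (hI : IsOpen I) {m₀ m₁ m₂ κ τ : ℝ → ℝ} {c : ℝ}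
    (hκ : ∀ s ∈ I, HasDerivAt κ (deriv κ s) s) (hτ : ∀ s ∈ I, τ s ≠ 0)
    (h₀ : ∀ s ∈ I, HasDerivAt m₀ 1 s)
    (h₁ : ∀ s ∈ I, HasDerivAt m₁ (-(m₀ s * κ s + m₂ s * τ s)) s)
    (h₂ : ∀ s ∈ I, HasDerivAt m₂ (-(m₁ s * τ s)) s)
    (hratio : ∀ s ∈ I, m₀ s ^ 2 = c * (m₂ s ^ 2 - m₁ s ^ 2)) (hm₀ : ∀ s ∈ I, m₀ s ≠ 0) :
    ∀ s ∈ I, m₁ s = 1 / (c * κ s) ∧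
      m₂ s = (deriv κ s - c * κ s ^ 3 * m₀ s) / (c * κ s ^ 2 * τ s) ∧
      HasDerivAt (fun x => (deriv κ x - c * κ x ^ 3 * m₀ x) / (c * κ x ^ 2 * τ x))
        (-τ s / (c * κ s)) s := by
  have hcκm₁ : ∀ s ∈ I, c * κ s * m₁ s = 1 := fun s hs =>
    mul_mul_eq_one_of_constRatio (h₀ s hs) (h₁ s hs) (h₂ s hs) rfl rfl
      (eventually_of_mem (hI.mem_nhds hs) hratio) (hm₀ s hs)
  have hcκ : ∀ s ∈ I, c * κ s ≠ 0 := fun s hs => left_ne_zero_of_mul_eq_one (hcκm₁ s hs)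
  have hm₁ : ∀ s ∈ I, m₁ s = 1 / (c * κ s) := fun s hs =>
    eq_one_div_of_mul_eq_one_right (hcκm₁ s hs)
  have hm₂ : ∀ s ∈ I, m₂ s = (deriv κ s - c * κ s ^ 3 * m₀ s) / (c * κ s ^ 2 * τ s) := by
    intro s hs
    have hinv : m₁ =ᶠ[𝓝 s] fun x => (c * κ x)⁻¹ :=
      eventually_of_mem (hI.mem_nhds hs) fun x hx => (hm₁ x hx).trans (one_div _)
    have h := (h₁ s hs).unique ((((hκ s hs).const_mul c).inv (hcκ s hs)).congr_of_eventuallyEq hinv)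
    have hκ0 := right_ne_zero_of_mul (hcκ s hs)
    have hc := left_ne_zero_of_mul (hcκ s hs)
    rw [eq_div_iff (by simp [hc, hκ0, hτ s hs])]
    field_simp at h
    linear_combination -h
  intro s hs
  refine ⟨hm₁ s hs, hm₂ s hs, ?_⟩
  refine ((h₂ s hs).congr_deriv ?_).congr_of_eventuallyEq
    (eventually_of_mem (hI.mem_nhds hs) fun x hx => (hm₂ x hx).symm)
  rw [hm₁ s hs]
  ring

theorem stmt_5_general
    (I : Set ℝ) (hIopen : IsOpen I)
    (y z : ℝ → ℝ)
    (hy : ContDiffOn ℝ 3 y I) (hz : ContDiffOn ℝ 3 z I)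
    (hadm : ∀ s ∈ I, (deriv (deriv y) s) ^ 2 - (deriv (deriv z) s) ^ 2 ≠ 0)
    (κ τ : ℝ → ℝ)
    (hκ : ∀ s ∈ I, κ s = Real.sqrt |(deriv (deriv y) s) ^ 2 - (deriv (deriv z) s) ^ 2|)
    (hτ : ∀ s ∈ I, τ s =
      (deriv (deriv y) s * deriv (deriv (deriv z)) s -
        deriv (deriv (deriv y)) s * deriv (deriv z) s) / (κ s) ^ 2)
    (hκC1 : ContDiffOn ℝ 1 κ I)
    (hτ0 : ∀ s ∈ I, τ s ≠ 0)
    (ε : ℝ) (hε : ε = 1 ∨ ε = -1)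
    (hεdef : ∀ s ∈ I, |(deriv (deriv y) s) ^ 2 - (deriv (deriv z) s) ^ 2| =
      ε * ((deriv (deriv y) s) ^ 2 - (deriv (deriv z) s) ^ 2))
    (T N B : ℝ → ℝ × ℝ × ℝ)
    (hT : ∀ s ∈ I, T s = (1, deriv y s, deriv z s))
    (hN : ∀ s ∈ I, N s = (0, deriv (deriv y) s / κ s, deriv (deriv z) s / κ s))
    (hB : ∀ s ∈ I, B s = (0, ε * deriv (deriv z) s / κ s, ε * deriv (deriv y) s / κ s))
    (m₀ m₁ m₂ : ℝ → ℝ)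
    (hm₀ : ∀ s ∈ I, DifferentiableAt ℝ m₀ s)
    (hm₁ : ∀ s ∈ I, DifferentiableAt ℝ m₁ s)
    (hm₂ : ∀ s ∈ I, DifferentiableAt ℝ m₂ s)
    (hdecomp : ∀ s ∈ I,
      ((s, y s, z s) : ℝ × ℝ × ℝ) = m₀ s • T s + m₁ s • N s + m₂ s • B s)
    (c₀ : ℝ) (hm₀eq : ∀ s ∈ I, m₀ s = s + c₀)
    (hne : ∀ s ∈ I, s + c₀ ≠ 0)
    (c₃ : ℝ)
    (hratio : ∀ s ∈ I, (m₀ s) ^ 2 = c₃ * ((m₂ s) ^ 2 - (m₁ s) ^ 2)) :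
    ∀ s ∈ I,
      m₁ s = 1 / (c₃ * κ s) ∧
      m₂ s = (deriv κ s - c₃ * (κ s) ^ 3 * (s + c₀)) / (c₃ * (κ s) ^ 2 * τ s) ∧
      HasDerivAt (fun x => (deriv κ x - c₃ * (κ x) ^ 3 * (x + c₀)) / (c₃ * (κ x) ^ 2 * τ x))
        (-(τ s) / (c₃ * κ s)) s := by
  have hκ0 : ∀ s ∈ I, κ s ≠ 0 := fun s hs => by
    rw [hκ s hs]; exact (Real.sqrt_pos.2 (abs_pos.2 (hadm s hs))).ne'
  have hκsq : ∀ s ∈ I, κ s ^ 2 = ε * (deriv (deriv y) s ^ 2 - deriv (deriv z) s ^ 2) :=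
    fun s hs => by rw [hκ s hs, Real.sq_sqrt (abs_nonneg _), hεdef s hs]
  have hε2 : ε ^ 2 = 1 := by rcases hε with rfl | rfl <;> norm_num
  have hcoeff : ∀ s ∈ I, deriv m₀ s = 1 ∧ deriv m₁ s = -(m₀ s * κ s + m₂ s * τ s) ∧
      deriv m₂ s = -(m₁ s * τ s) := by
    intro s hs
    obtain ⟨hα, hT', hN', hB'⟩ :=
      pseudoGalilean_frenet_equations hIopen hy hz hκC1 hκ0 hε2 hκsq hτ hT hN hB hs
    refine coeff_derivs_of_frenet ?_ hα hT' hN' hB' (hm₀ s hs).hasDerivAt (hm₁ s hs).hasDerivAt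
      (hm₂ s hs).hasDerivAt (eventually_of_mem (hIopen.mem_nhds hs) hdecomp)
    rw [hT s hs, hN s hs, hB s hs]
    exact linearIndependent_pseudoGalilean_frame (hadm s hs) (hκ0 s hs)
      (by rintro rfl; norm_num at hε2)
  have hsol := constRatio_coeffs hIopen (fun s hs => hκC1.hasDerivAt_deriv hIopen one_ne_zero hs)
    hτ0 (fun s hs => (hcoeff s hs).1 ▸ (hm₀ s hs).hasDerivAt)
    (fun s hs => (hcoeff s hs).2.1 ▸ (hm₁ s hs).hasDerivAt)
    (fun s hs => (hcoeff s hs).2.2 ▸ (hm₂ s hs).hasDerivAt) hratio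
    (fun s hs => hm₀eq s hs ▸ hne s hs)
  intro s hs
  obtain ⟨hm₁s, hm₂s, hderiv⟩ := hsol s hs
  rw [hm₀eq s hs] at hm₂s
  refine ⟨hm₁s, hm₂s, hderiv.congr_of_eventuallyEq ?_⟩
  filter_upwards [hIopen.mem_nhds hs] with x hx
  rw [hm₀eq x hx]

/-- For an admissible spacelike curve of constant-ratio in `G¹₃`
(i.e. `m₀² = c₃ (m₂² - m₁²)` for a nonzero constant `c₃`), with continuously
differentiable curvature `κ`, nowhere-vanishing torsion `τ`, `m₀ s = s + c₀ ≠ 0` on `I`,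
the components satisfy `m₁ = 1/(c₃ κ)`, `m₂ = (κ' - c₃ κ³ (s + c₀))/(c₃ κ² τ)`, and this
last function has derivative `-τ/(c₃ κ)`. -/
theorem stmt_5
    (I : Set ℝ) (hIopen : IsOpen I) (hIconv : Convex ℝ I)
    (hInondeg : ∃ a ∈ I, ∃ b ∈ I, a ≠ b)
    (y z : ℝ → ℝ)
    (hy : ContDiffOn ℝ 3 y I) (hz : ContDiffOn ℝ 3 z I)
    (hadm : ∀ s ∈ I, (deriv (deriv y) s) ^ 2 - (deriv (deriv z) s) ^ 2 ≠ 0)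
    (κ τ : ℝ → ℝ)
    (hκ : ∀ s ∈ I, κ s = Real.sqrt |(deriv (deriv y) s) ^ 2 - (deriv (deriv z) s) ^ 2|)
    (hτ : ∀ s ∈ I, τ s =
      (deriv (deriv y) s * deriv (deriv (deriv z)) s -
        deriv (deriv (deriv y)) s * deriv (deriv z) s) / (κ s) ^ 2)
    (hκC1 : ContDiffOn ℝ 1 κ I)
    (hτ0 : ∀ s ∈ I, τ s ≠ 0)
    (ε : ℝ) (hε : ε = 1 ∨ ε = -1)
    (hεdef : ∀ s ∈ I, |(deriv (deriv y) s) ^ 2 - (deriv (deriv z) s) ^ 2| =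
      ε * ((deriv (deriv y) s) ^ 2 - (deriv (deriv z) s) ^ 2))
    (T N B : ℝ → ℝ × ℝ × ℝ)
    (hT : ∀ s ∈ I, T s = (1, deriv y s, deriv z s))
    (hN : ∀ s ∈ I, N s = (0, deriv (deriv y) s / κ s, deriv (deriv z) s / κ s))
    (hB : ∀ s ∈ I, B s = (0, ε * deriv (deriv z) s / κ s, ε * deriv (deriv y) s / κ s))
    (m₀ m₁ m₂ : ℝ → ℝ)
    (hm₀ : ∀ s ∈ I, DifferentiableAt ℝ m₀ s)
    (hm₁ : ∀ s ∈ I, DifferentiableAt ℝ m₁ s)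
    (hm₂ : ∀ s ∈ I, DifferentiableAt ℝ m₂ s)
    (hdecomp : ∀ s ∈ I,
      ((s, y s, z s) : ℝ × ℝ × ℝ) = m₀ s • T s + m₁ s • N s + m₂ s • B s)
    (c₀ : ℝ) (hm₀eq : ∀ s ∈ I, m₀ s = s + c₀)
    (hne : ∀ s ∈ I, s + c₀ ≠ 0)
    (c₃ : ℝ) (hc₃ : c₃ ≠ 0)
    (hratio : ∀ s ∈ I, (m₀ s) ^ 2 = c₃ * ((m₂ s) ^ 2 - (m₁ s) ^ 2)) :
    ∀ s ∈ I,
      m₁ s = 1 / (c₃ * κ s) ∧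
      m₂ s = (deriv κ s - c₃ * (κ s) ^ 3 * (s + c₀)) / (c₃ * (κ s) ^ 2 * τ s) ∧
      HasDerivAt (fun x => (deriv κ x - c₃ * (κ x) ^ 3 * (x + c₀)) / (c₃ * (κ x) ^ 2 * τ x))
        (-(τ s) / (c₃ * κ s)) s :=
  stmt_5_general I hIopen y z hy hz hadm κ τ hκ hτ hκC1 hτ0 ε hε hεdef T N B hT hN hB m₀ m₁ m₂ hm₀
    hm₁ hm₂ hdecomp c₀ hm₀eq hne c₃ hratio
end

section
/- Let I ⊆ ℝ be a nondegenerate interval, κ : I → ℝ continuous, τ : I → ℝ arbitrary, c₀ ∈ ℝ, m₀(s) = s + c₀, and let m₁, m₂ : I → ℝ be differentiable functions satisfying m₁'(s) + κ(s)m₀(s) + τ(s)m₂(s) = 0 and m₂'(s) + τ(s)m₁(s) = 0 on I. If m₂(s) = m₁(s) for all s ∈ I, or m₂(s) = −m₁(s) for all s ∈ I, then κ(s) = 0 for all s ∈ I. Consequently, an N-constant curve of first kind realized by one of these two cases has identically vanishing curvature, i.e. it is a straight line in the pseudo-Galilean space G¹₃. -/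
/-- If the Frenet components `m₀ s = s + c₀`, `m₁`, `m₂` satisfy
`m₁' + κ m₀ + τ m₂ = 0` and `m₂' + τ m₁ = 0` on a nondegenerate interval `I`, and either
`m₂ = m₁` on `I` or `m₂ = -m₁` on `I` (N-constant of first kind), then `κ = 0` on `I`,
i.e. the curve is a straight line in the pseudo-Galilean space `G¹₃`. -/
theorem stmt_8
    (I : Set ℝ) (hIconv : Convex ℝ I)
    (hInondeg : ∃ a ∈ I, ∃ b ∈ I, a ≠ b)
    (κ : ℝ → ℝ) (hκ : ContinuousOn κ I)
    (τ : ℝ → ℝ) (c₀ : ℝ)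
    (m₁ m₂ : ℝ → ℝ)
    (h1 : ∀ s ∈ I, HasDerivAt m₁ (-(κ s * (s + c₀)) - τ s * m₂ s) s)
    (h2 : ∀ s ∈ I, HasDerivAt m₂ (-(τ s * m₁ s)) s)
    (hcase : (∀ s ∈ I, m₂ s = m₁ s) ∨ (∀ s ∈ I, m₂ s = -m₁ s)) :
    ∀ s ∈ I, κ s = 0 := by
  -- interior of I is nonempty
  obtain ⟨a, ha, b, hb, hab⟩ := hInondeg
  have hint : (interior I).Nonempty := by
    rcases lt_or_gt_of_ne hab with h | h
    · exact ⟨(a + b) / 2, interior_mono (hIconv.ordConnected.out ha hb)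
        (by simp [interior_Icc]; constructor <;> linarith)⟩
    · exact ⟨(b + a) / 2, interior_mono (hIconv.ordConnected.out hb ha)
        (by simp [interior_Icc]; constructor <;> linarith)⟩
  have hud : UniqueDiffOn ℝ I := uniqueDiffOn_convex hIconv hint
  -- key: κ s * (s + c₀) = 0 on I
  have key : ∀ s ∈ I, κ s * (s + c₀) = 0 := by
    intro s hs
    have hd1 := (h1 s hs).hasDerivWithinAt (s := I)
    have hd2 := (h2 s hs).hasDerivWithinAt (s := I)
    rcases hcase with hc | hc
    · -- m₂ = m₁ on I
      have hd2' : HasDerivWithinAt m₂ (-(κ s * (s + c₀)) - τ s * m₂ s) I s :=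
        hd1.congr_of_mem (fun x hx => (hc x hx)) hs
      have := (hd2'.derivWithin (hud s hs)).symm.trans (hd2.derivWithin (hud s hs))
      rw [hc s hs] at this
      linarith [this]
    · -- m₂ = -m₁ on I
      have hd2' : HasDerivWithinAt m₂ (-(-(κ s * (s + c₀)) - τ s * m₂ s)) I s :=
        (hd1.neg).congr_of_mem (fun x hx => (hc x hx)) hs
      have := (hd2'.derivWithin (hud s hs)).symm.trans (hd2.derivWithin (hud s hs))
      rw [hc s hs] at this
      linarith [this]
  intro s hs
  rcases eq_or_ne (s + c₀) 0 with h0 | h0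
  · -- limit point argument at s = -c₀
    have hd : ∃ d ∈ I, d ≠ s := by
      rcases eq_or_ne a s with rfl | h
      · exact ⟨b, hb, hab.symm⟩
      · exact ⟨a, ha, h⟩
    obtain ⟨d, hdI, hds⟩ := hd
    set u : ℕ → ℝ := fun n => s + (d - s) / (n + 1) with hu
    have huI : ∀ n, u n ∈ I := by
      intro n
      have h1n : (0:ℝ) < (n:ℝ) + 1 := by positivity
      have ht0 : (0:ℝ) ≤ 1 / ((n:ℝ) + 1) := by positivity
      have ht1 : 1 / ((n:ℝ) + 1) ≤ 1 := by
        rw [div_le_one h1n]; linarith [Nat.cast_nonneg (α := ℝ) n]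
      have := hIconv hs hdI (a := 1 - 1 / ((n:ℝ)+1)) (b := 1 / ((n:ℝ)+1))
        (by linarith) ht0 (by ring)
      convert this using 1
      simp [hu, smul_eq_mul]
      ring
    have hune : ∀ n, u n + c₀ ≠ 0 := by
      intro n
      have : u n + c₀ = (d - s) / (n + 1) := by rw [hu]; simp; linarith
      rw [this]
      exact div_ne_zero (sub_ne_zero.mpr hds) (by positivity)
    have hκu : ∀ n, κ (u n) = 0 := fun n => by
      have := key (u n) (huI n)
      exact (mul_eq_zero.mp this).resolve_right (hune n)
    have hlim : Filter.Tendsto u Filter.atTop (nhds s) := by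
      have : Filter.Tendsto (fun n : ℕ => (d - s) / ((n:ℝ) + 1)) Filter.atTop (nhds 0) :=
        Filter.Tendsto.div_atTop tendsto_const_nhds (Filter.tendsto_atTop_add_const_right _ 1
          tendsto_natCast_atTop_atTop)
      have := this.const_add s
      simpa using this
    have hlim' : Filter.Tendsto u Filter.atTop (nhdsWithin s I) :=
      tendsto_nhdsWithin_of_tendsto_nhds_of_eventually_within u hlim
        (Filter.Eventually.of_forall huI)
    have : Filter.Tendsto (κ ∘ u) Filter.atTop (nhds (κ s)) :=
      (hκ s hs).tendsto.comp hlim'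
    have h0' : Filter.Tendsto (κ ∘ u) Filter.atTop (nhds 0) := by
      have heq : (κ ∘ u) = fun _ => (0:ℝ) := funext fun n => hκu n
      rw [heq]
      exact tendsto_const_nhds
    exact tendsto_nhds_unique this h0'
  · have := key s hs
    exact (mul_eq_zero.mp this).resolve_right h0
end

section
/- Let I ⊆ ℝ be an interval, τ : I → ℝ continuous, c₄, c₅ ∈ ℝ, and let u : I → ℝ be an antiderivative of τ plus the constant c₅. Define m₂(s) = (1/4)e^{−u(s)}(−4c₄ + e^{2u(s)}) and m₁(s) = (1/4)e^{−u(s)}(−4c₄ + e^{2u(s)}) − (1/2)e^{u(s)}. Then m₂'(s) + τ(s)m₁(s) = 0 for all s ∈ I, and m₂(s)² − m₁(s)² = −c₄ for all s ∈ I; in particular m₂² − m₁² is constant, so a curve α = (s + c₀)T + m₁N + m₂B with these components is an N-constant curve in the pseudo-Galilean space G¹₃, of second kind when c₄ ≠ 0. -/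
open Real

/-! Writing `m₂ = eᵘ/4 - c₄e⁻ᵘ` gives `m₁ = -eᵘ/4 - c₄e⁻ᵘ`, so `m₂ - m₁ = eᵘ/2` and
`m₂ + m₁ = -2c₄e⁻ᵘ` multiply to `-c₄`, while `m₂' = u'(eᵘ/4 + c₄e⁻ᵘ) = -τ m₁`. -/

lemma quarter_mul_exp_neg_mul_eq (c x : ℝ) :
    1 / 4 * exp (-x) * (-4 * c + exp (2 * x)) = exp x / 4 - c * exp (-x) := by
  have h : exp (-x) * exp (2 * x) = exp x := by rw [← exp_add]; ring_nf
  linear_combination (1 / 4 : ℝ) * h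

lemma sq_sub_sq_exp_div_four_sub_mul_exp_neg (c x : ℝ) :
    (exp x / 4 - c * exp (-x)) ^ 2 - (exp x / 4 - c * exp (-x) - exp x / 2) ^ 2 = -c := by
  have h : exp x * exp (-x) = 1 := by rw [← exp_add, add_neg_cancel, exp_zero]
  linear_combination (-c) * h

lemma hasDerivAt_exp_div_four_sub_mul_exp_neg {u : ℝ → ℝ} {u' s : ℝ} (hu : HasDerivAt u u' s)
    (c : ℝ) :
    HasDerivAt (fun x => exp (u x) / 4 - c * exp (-u x))
      (-(u' * (exp (u s) / 4 - c * exp (-u s) - exp (u s) / 2))) s := by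
  refine ((hu.exp.div_const 4).fun_sub (hu.fun_neg.exp.const_mul c)).congr_deriv ?_
  ring

theorem stmt_10_general
    (I : Set ℝ)
    (τ : ℝ → ℝ)
    (c₄ c₅ : ℝ)
    (F : ℝ → ℝ) (hF : ∀ s ∈ I, HasDerivAt F (τ s) s)
    (u : ℝ → ℝ) (hu : ∀ s : ℝ, u s = F s + c₅)
    (m₁ m₂ : ℝ → ℝ)
    (hm₂ : ∀ s : ℝ, m₂ s = (1/4) * Real.exp (-u s) * (-4 * c₄ + Real.exp (2 * u s)))
    (hm₁ : ∀ s : ℝ, m₁ s =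
      (1/4) * Real.exp (-u s) * (-4 * c₄ + Real.exp (2 * u s)) - (1/2) * Real.exp (u s)) :
    (∀ s ∈ I, HasDerivAt m₂ (-(τ s * m₁ s)) s) ∧
    (∀ s ∈ I, (m₂ s) ^ 2 - (m₁ s) ^ 2 = -c₄) ∧
    ∃ c : ℝ, ∀ s ∈ I, (m₂ s) ^ 2 - (m₁ s) ^ 2 = c := by
  have hm₂_eq : m₂ = fun x => exp (u x) / 4 - c₄ * exp (-u x) :=
    funext fun x => (hm₂ x).trans (quarter_mul_exp_neg_mul_eq c₄ (u x))
  have hm₁_eq : ∀ s, m₁ s = m₂ s - exp (u s) / 2 := by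
    intro s
    rw [hm₁, hm₂]
    ring
  have hconst : ∀ s ∈ I, (m₂ s) ^ 2 - (m₁ s) ^ 2 = -c₄ := by
    intro s _
    rw [hm₁_eq, hm₂_eq]
    exact sq_sub_sq_exp_div_four_sub_mul_exp_neg c₄ (u s)
  refine ⟨fun s hs => ?_, hconst, -c₄, hconst⟩
  have hu_deriv : HasDerivAt u (τ s) s :=
    ((hF s hs).add_const c₅).congr_of_eventuallyEq (Filter.Eventually.of_forall hu)
  rw [hm₁_eq, hm₂_eq]
  exact hasDerivAt_exp_div_four_sub_mul_exp_neg hu_deriv c₄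

/-- With `u = (antiderivative of τ) + c₅`,
`m₂ s = (1/4) e^{-u s} (-4 c₄ + e^{2 u s})` and `m₁ s = m₂ s - (1/2) e^{u s}` satisfy
`m₂' + τ m₁ = 0` and `m₂² - m₁² = -c₄` on `I`; in particular `m₂² - m₁²` is constant,
so a curve `α = (s + c₀) T + m₁ N + m₂ B` with these components is an N-constant curve
in `G¹₃`, of second kind when `c₄ ≠ 0`. -/
theorem stmt_10
    (I : Set ℝ) (hIconv : Convex ℝ I)
    (τ : ℝ → ℝ) (hτ : ContinuousOn τ I)
    (c₀ c₄ c₅ : ℝ)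
    (F : ℝ → ℝ) (hF : ∀ s ∈ I, HasDerivAt F (τ s) s)
    (u : ℝ → ℝ) (hu : ∀ s : ℝ, u s = F s + c₅)
    (m₁ m₂ : ℝ → ℝ)
    (hm₂ : ∀ s : ℝ, m₂ s = (1/4) * Real.exp (-u s) * (-4 * c₄ + Real.exp (2 * u s)))
    (hm₁ : ∀ s : ℝ, m₁ s =
      (1/4) * Real.exp (-u s) * (-4 * c₄ + Real.exp (2 * u s)) - (1/2) * Real.exp (u s)) :
    (∀ s ∈ I, HasDerivAt m₂ (-(τ s * m₁ s)) s) ∧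
    (∀ s ∈ I, (m₂ s) ^ 2 - (m₁ s) ^ 2 = -c₄) ∧
    ∃ c : ℝ, ∀ s ∈ I, (m₂ s) ^ 2 - (m₁ s) ^ 2 = c :=
  stmt_10_general I τ c₄ c₅ F hF u hu m₁ m₂ hm₂ hm₁
end

section
/- For s ∈ (0, ∞), let α(s) = (s, (s/6)(2 sinh(2 ln s) − cosh(2 ln s)), (s/6)(2 cosh(2 ln s) − sinh(2 ln s))). Then α is an admissible spacelike curve in the pseudo-Galilean space G¹₃ with α'(s) = (1, (1/2)cosh(2 ln s), (1/2)sinh(2 ln s)), curvature κ(s) = 1/s, torsion τ(s) = −2/s, tangent T(s) = α'(s), principal normal N(s) = (0, sinh(2 ln s), cosh(2 ln s)), and binormal B(s) = (0, −cosh(2 ln s), −sinh(2 ln s)). -/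
/-! With `u = 2 log s` one has `du/ds = 2/s`, so differentiating `sinh u` and `cosh u` swaps
them up to the factor `2/s`. Hence `y'' = sinh u / s` and `z'' = cosh u / s`, and
`cosh² - sinh² = 1` makes `y''² - z''² = -1/s²` (so `κ = 1/s`, `ε = -1`) and the torsion
numerator `y'' z''' - y''' z'' = -2/s³`. -/

/-- The second coordinate of the curve of Example 4.1. -/
noncomputable def yEx : ℝ → ℝ := fun s =>
  s / 6 * (2 * Real.sinh (2 * Real.log s) - Real.cosh (2 * Real.log s))

/-- The third coordinate of the curve of Example 4.1. -/
noncomputable def zEx : ℝ → ℝ := fun s =>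
  s / 6 * (2 * Real.cosh (2 * Real.log s) - Real.sinh (2 * Real.log s))

open Real Set Filter

section

variable {s : ℝ}

lemma hasDerivAt_two_mul_log (hs : s ≠ 0) : HasDerivAt (fun t => 2 * log t) (2 / s) s := by
  simpa [div_eq_mul_inv] using (hasDerivAt_log hs).const_mul 2

lemma hasDerivAt_sinh_two_mul_log (hs : s ≠ 0) :
    HasDerivAt (fun t => sinh (2 * log t)) (2 * cosh (2 * log s) / s) s := by
  convert (hasDerivAt_two_mul_log hs).sinh using 1
  ring

lemma hasDerivAt_cosh_two_mul_log (hs : s ≠ 0) :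
    HasDerivAt (fun t => cosh (2 * log t)) (2 * sinh (2 * log s) / s) s := by
  convert (hasDerivAt_two_mul_log hs).cosh using 1
  ring

lemma hasDerivAt_yEx (hs : s ≠ 0) : HasDerivAt yEx (1 / 2 * cosh (2 * log s)) s := by
  have h := ((hasDerivAt_id' s).div_const 6).fun_mul
    (((hasDerivAt_sinh_two_mul_log hs).const_mul 2).fun_sub (hasDerivAt_cosh_two_mul_log hs))
  refine h.congr_deriv ?_
  field_simp
  ring

lemma hasDerivAt_zEx (hs : s ≠ 0) : HasDerivAt zEx (1 / 2 * sinh (2 * log s)) s := by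
  have h := ((hasDerivAt_id' s).div_const 6).fun_mul
    (((hasDerivAt_cosh_two_mul_log hs).const_mul 2).fun_sub (hasDerivAt_sinh_two_mul_log hs))
  refine h.congr_deriv ?_
  field_simp
  ring

lemma deriv_yEx (hs : s ≠ 0) : deriv yEx s = 1 / 2 * cosh (2 * log s) :=
  (hasDerivAt_yEx hs).deriv

lemma deriv_zEx (hs : s ≠ 0) : deriv zEx s = 1 / 2 * sinh (2 * log s) :=
  (hasDerivAt_zEx hs).deriv

lemma deriv_deriv_yEx (hs : s ≠ 0) : deriv (deriv yEx) s = sinh (2 * log s) / s := by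
  rw [(eventuallyEq_of_mem (isOpen_compl_singleton.mem_nhds hs) fun _ => deriv_yEx).deriv_eq,
    ((hasDerivAt_cosh_two_mul_log hs).const_mul _).deriv]
  ring

lemma deriv_deriv_zEx (hs : s ≠ 0) : deriv (deriv zEx) s = cosh (2 * log s) / s := by
  rw [(eventuallyEq_of_mem (isOpen_compl_singleton.mem_nhds hs) fun _ => deriv_zEx).deriv_eq,
    ((hasDerivAt_sinh_two_mul_log hs).const_mul _).deriv]
  ring

lemma deriv_deriv_deriv_yEx (hs : s ≠ 0) :
    deriv (deriv (deriv yEx)) s = (2 * cosh (2 * log s) - sinh (2 * log s)) / s ^ 2 := by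
  rw [(eventuallyEq_of_mem (isOpen_compl_singleton.mem_nhds hs) fun _ => deriv_deriv_yEx).deriv_eq,
    ((hasDerivAt_sinh_two_mul_log hs).fun_div (hasDerivAt_id' s) hs).deriv]
  field_simp

lemma deriv_deriv_deriv_zEx (hs : s ≠ 0) :
    deriv (deriv (deriv zEx)) s = (2 * sinh (2 * log s) - cosh (2 * log s)) / s ^ 2 := by
  rw [(eventuallyEq_of_mem (isOpen_compl_singleton.mem_nhds hs) fun _ => deriv_deriv_zEx).deriv_eq,
    ((hasDerivAt_cosh_two_mul_log hs).fun_div (hasDerivAt_id' s) hs).deriv]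
  field_simp

lemma sq_deriv_deriv_yEx_sub_sq_deriv_deriv_zEx (hs : s ≠ 0) :
    deriv (deriv yEx) s ^ 2 - deriv (deriv zEx) s ^ 2 = -(1 / s) ^ 2 := by
  rw [deriv_deriv_yEx hs, deriv_deriv_zEx hs]
  field_simp
  linear_combination -cosh_sq_sub_sinh_sq (2 * log s)

lemma torsion_numerator_yEx_zEx (hs : s ≠ 0) :
    deriv (deriv yEx) s * deriv (deriv (deriv zEx)) s -
      deriv (deriv (deriv yEx)) s * deriv (deriv zEx) s = -2 / s ^ 3 := by
  rw [deriv_deriv_yEx hs, deriv_deriv_zEx hs, deriv_deriv_deriv_yEx hs,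
    deriv_deriv_deriv_zEx hs]
  field_simp
  linear_combination -2 * cosh_sq_sub_sinh_sq (2 * log s)

end

lemma contDiffOn_two_mul_log {n : WithTop ℕ∞} : ContDiffOn ℝ n (fun t => 2 * log t) {0}ᶜ :=
  contDiffOn_const.mul contDiffOn_log

lemma contDiffOn_yEx {n : WithTop ℕ∞} : ContDiffOn ℝ n yEx {0}ᶜ :=
  (contDiffOn_id.div_const 6).mul ((contDiffOn_const.mul
    (contDiff_sinh.comp_contDiffOn contDiffOn_two_mul_log)).sub
    (contDiff_cosh.comp_contDiffOn contDiffOn_two_mul_log))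

lemma contDiffOn_zEx {n : WithTop ℕ∞} : ContDiffOn ℝ n zEx {0}ᶜ :=
  (contDiffOn_id.div_const 6).mul ((contDiffOn_const.mul
    (contDiff_cosh.comp_contDiffOn contDiffOn_two_mul_log)).sub
    (contDiff_sinh.comp_contDiffOn contDiffOn_two_mul_log))

/-- The curve `α s = (s, yEx s, zEx s)` on `(0, ∞)` is an admissible
spacelike curve in `G¹₃` with `α' s = (1, (1/2) cosh (2 ln s), (1/2) sinh (2 ln s))`,
curvature `1/s`, torsion `-2/s`, principal normal `N s = (0, sinh (2 ln s), cosh (2 ln s))`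
and binormal `B s = (0, -cosh (2 ln s), -sinh (2 ln s))`. -/
theorem stmt_12 :
    ContDiffOn ℝ 3 yEx (Set.Ioi 0) ∧ ContDiffOn ℝ 3 zEx (Set.Ioi 0) ∧
    (∀ s ∈ Set.Ioi (0 : ℝ),
      deriv yEx s = 1 / 2 * Real.cosh (2 * Real.log s) ∧
      deriv zEx s = 1 / 2 * Real.sinh (2 * Real.log s) ∧
      (deriv (deriv yEx) s) ^ 2 - (deriv (deriv zEx) s) ^ 2 ≠ 0 ∧
      Real.sqrt |(deriv (deriv yEx) s) ^ 2 - (deriv (deriv zEx) s) ^ 2| = 1 / s ∧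
      (deriv (deriv yEx) s * deriv (deriv (deriv zEx)) s -
        deriv (deriv (deriv yEx)) s * deriv (deriv zEx) s) / (1 / s) ^ 2 = -2 / s ∧
      deriv (deriv yEx) s / (1 / s) = Real.sinh (2 * Real.log s) ∧
      deriv (deriv zEx) s / (1 / s) = Real.cosh (2 * Real.log s)) ∧
    ∃ ε : ℝ, (ε = 1 ∨ ε = -1) ∧ ∀ s ∈ Set.Ioi (0 : ℝ),
      |(deriv (deriv yEx) s) ^ 2 - (deriv (deriv zEx) s) ^ 2| =
        ε * ((deriv (deriv yEx) s) ^ 2 - (deriv (deriv zEx) s) ^ 2) ∧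
      ε * deriv (deriv zEx) s / (1 / s) = -Real.cosh (2 * Real.log s) ∧
      ε * deriv (deriv yEx) s / (1 / s) = -Real.sinh (2 * Real.log s) := by
  have hIoi : Ioi (0 : ℝ) ⊆ {0}ᶜ := fun _ hs => (mem_Ioi.mp hs).ne'
  refine ⟨contDiffOn_yEx.mono hIoi, contDiffOn_zEx.mono hIoi, fun s hs => ?_,
    -1, Or.inr rfl, fun s hs => ?_⟩
  all_goals
    have hs0 : s ≠ 0 := (mem_Ioi.mp hs).ne'
    rw [sq_deriv_deriv_yEx_sub_sq_deriv_deriv_zEx hs0, abs_neg, abs_sq]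
  · refine ⟨deriv_yEx hs0, deriv_zEx hs0, by simpa using hs0,
      sqrt_sq (one_div_nonneg.mpr (mem_Ioi.mp hs).le), ?_, ?_, ?_⟩
    · rw [torsion_numerator_yEx_zEx hs0]
      field_simp
    all_goals
      simp only [deriv_deriv_yEx hs0, deriv_deriv_zEx hs0]
      field_simp
  · refine ⟨by ring, ?_, ?_⟩ <;>
    · simp only [deriv_deriv_yEx hs0, deriv_deriv_zEx hs0]
      field_simp
end
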